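/- The deformation of the restricted generator is a bounded perturbation: assume ν > 0, so that λ_j > 0 for all j. Then for every x ∈ ℓ²(ℕ, ℝ), ∑_{j≥0} ( N_ex·sin²(φ√(j+1)) · (μ_{j+1}/λ_j) · x_{j+1} )² ≤ ( N_ex² (ν+1)/ν ) · ∑_{j≥0} x_j²; in particular the weighted shift x ↦ ( N_ex·sin²(φ√(j+1))·(μ_{j+1}/λ_j)·x_{j+1} )_{j≥0} is a bounded operator on ℓ²(ℕ, ℝ) of norm at most N_ex·√((ν+1)/ν). -/

import Mathlib

noncomputable section

abbrev HR : Type := lp (fun _ : ℕ => ℝ) 2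

/-- Birth rates `λ_k² = N_ex·sin²(φ√(k+1)) + ν·(k+1)`. -/
noncomputable def lam2 (Nex ν φ : ℝ) (k : ℕ) : ℝ :=
  Nex * Real.sin (φ * Real.sqrt (k + 1)) ^ 2 + ν * (k + 1)

/-- Death rates `μ_k² = (ν+1)·k` (so `μ_0 = 0`). -/
noncomputable def mu2 (ν : ℝ) (k : ℕ) : ℝ := (ν + 1) * k

/-- The nonnegative square root `λ_k` of the birth rate. -/
noncomputable def lam (Nex ν φ : ℝ) (k : ℕ) : ℝ := Real.sqrt (lam2 Nex ν φ k)

/-- The nonnegative square root `μ_k` of the death rate. -/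
noncomputable def mu (ν : ℝ) (k : ℕ) : ℝ := Real.sqrt (mu2 ν k)

/-- The coefficient of the weighted shift appearing in the deformation `δ_s`
(without the scalar factor `eˢ − 1`): `j ↦ N_ex·sin²(φ√(j+1))·(μ_{j+1}/λ_j)`. -/
noncomputable def defCoeff (Nex ν φ : ℝ) (j : ℕ) : ℝ :=
  Nex * Real.sin (φ * Real.sqrt (j + 1)) ^ 2 * (mu ν (j + 1) / lam Nex ν φ j)

/-!
The deformation is the left shift followed by multiplication by the coefficients
`c_j = N_ex sin²(φ√(j+1)) μ_{j+1}/λ_j`. Since `λ_j² ≥ ν (j+1)` and `μ_{j+1}² = (ν+1)(j+1)`,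
`|c_j| ≤ N_ex √((ν+1)/ν)`. The shift is a contraction on every `ℓ^p` and multiplication by a
bounded sequence has norm at most its bound; on `ℓ²` the square of the operator-norm bound is the
bound on sums of squares.
-/

open scoped ENNReal

theorem Memℓp.comp_injective {α β E : Type*} [NormedAddCommGroup E] {p : ℝ≥0∞} {f : β → E}
    (hf : Memℓp f p) {g : α → β} (hg : g.Injective) : Memℓp (f ∘ g) p := by
  rcases p.trichotomy with rfl | rfl | hp
  · exact memℓp_zero ((memℓp_zero_iff.1 hf).preimage hg.injOn)
  · exact memℓp_infty ((memℓp_infty_iff.1 hf).mono (Set.range_comp_subset_range g (‖f ·‖)))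
  · exact memℓp_gen ((hf.summable hp).comp_injective hg)

namespace lp

variable {α β 𝕜 E : Type*} [NontriviallyNormedField 𝕜] [NormedAddCommGroup E] [NormedSpace 𝕜 E]
  {p : ℝ≥0∞} [Fact (1 ≤ p)]

theorem norm_comp_injective_le (x : lp (fun _ : β => E) p) {g : α → β} (hg : g.Injective) :
    ‖(⟨x ∘ g, (lp.memℓp x).comp_injective hg⟩ : lp (fun _ : α => E) p)‖ ≤ ‖x‖ := by
  rcases p.trichotomy with rfl | rfl | hp
  · exact absurd (Fact.out : (1 : ℝ≥0∞) ≤ 0) (by simp)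
  · exact norm_le_of_forall_le (norm_nonneg x) fun i => norm_apply_le_norm (by simp) x (g i)
  · refine norm_le_of_forall_sum_le hp (norm_nonneg x) fun s => ?_
    calc ∑ i ∈ s, ‖x (g i)‖ ^ p.toReal = ∑ j ∈ s.map ⟨g, hg⟩, ‖x j‖ ^ p.toReal :=
          (Finset.sum_map s ⟨g, hg⟩ (‖x ·‖ ^ p.toReal)).symm
      _ ≤ ‖x‖ ^ p.toReal := sum_rpow_le_norm_rpow hp x _

variable (𝕜 E p) in
noncomputable def compInjectiveCLM {g : α → β} (hg : g.Injective) :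
    lp (fun _ : β => E) p →L[𝕜] lp (fun _ : α => E) p :=
  LinearMap.mkContinuous
    { toFun x := ⟨x ∘ g, (lp.memℓp x).comp_injective hg⟩
      map_add' _ _ := rfl
      map_smul' _ _ := rfl }
    1 fun x => (one_mul ‖x‖).symm ▸ norm_comp_injective_le x hg

theorem norm_compInjectiveCLM_le {g : α → β} (hg : g.Injective) :
    ‖compInjectiveCLM 𝕜 E p hg‖ ≤ 1 :=
  LinearMap.mkContinuous_norm_le _ zero_le_one _

variable (E p) in
noncomputable def weightedShift (w : ℕ → 𝕜) {K : ℝ} (hK : 0 ≤ K) (hw : ∀ j, ‖w j‖ ≤ K) :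
    lp (fun _ : ℕ => E) p →L[𝕜] lp (fun _ : ℕ => E) p :=
  (mapCLM p (fun j => w j • ContinuousLinearMap.id 𝕜 E) hK fun j =>
      (norm_smul_le _ _).trans <|
        (mul_le_of_le_one_right (norm_nonneg _) ContinuousLinearMap.norm_id_le).trans (hw j)).comp
    (compInjectiveCLM 𝕜 E p Nat.succ_injective)

theorem weightedShift_apply (w : ℕ → 𝕜) {K : ℝ} (hK : 0 ≤ K) (hw : ∀ j, ‖w j‖ ≤ K)
    (x : lp (fun _ : ℕ => E) p) (j : ℕ) : weightedShift E p w hK hw x j = w j • x (j + 1) :=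
  rfl

theorem norm_weightedShift_le (w : ℕ → 𝕜) {K : ℝ} (hK : 0 ≤ K) (hw : ∀ j, ‖w j‖ ≤ K) :
    ‖weightedShift E p w hK hw‖ ≤ K :=
  calc _ ≤ ‖mapCLM p (fun j => w j • ContinuousLinearMap.id 𝕜 E) hK _‖ *
        ‖compInjectiveCLM 𝕜 E p Nat.succ_injective‖ := ContinuousLinearMap.opNorm_comp_le _ _
    _ ≤ K * 1 := mul_le_mul (norm_mapCLM_le p _ hK _) (norm_compInjectiveCLM_le _) (norm_nonneg _) hK
    _ = K := mul_one K

end lp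

theorem lp.hasSum_sq {α : Type*} (x : lp (fun _ : α => ℝ) 2) :
    HasSum (fun i => x i ^ 2) (‖x‖ ^ 2) := by
  simpa [Real.norm_eq_abs, sq_abs] using lp.hasSum_norm (by norm_num : 0 < (2 : ℝ≥0∞).toReal) x

section Rates

variable {Nex ν φ : ℝ}

theorem mu_succ_div_lam_le (hNex : 0 ≤ Nex) (hν : 0 < ν) (j : ℕ) :
    mu ν (j + 1) / lam Nex ν φ j ≤ √((ν + 1) / ν) := by
  have hden : ν * (j + 1) ≤ lam2 Nex ν φ j := le_add_of_nonneg_left (by positivity)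
  rw [mu, lam, ← Real.sqrt_div' _ ((by positivity : (0 : ℝ) ≤ ν * (j + 1)).trans hden)]
  refine Real.sqrt_le_sqrt ?_
  calc mu2 ν (j + 1) / lam2 Nex ν φ j = (ν + 1) * (j + 1) / lam2 Nex ν φ j := by
        rw [mu2]; push_cast; rfl
    _ ≤ (ν + 1) * (j + 1) / (ν * (j + 1)) :=
        div_le_div_of_nonneg_left (by positivity) (by positivity) hden
    _ = (ν + 1) / ν := mul_div_mul_right _ _ (by positivity)

theorem norm_defCoeff_le (hNex : 0 ≤ Nex) (hν : 0 < ν) (j : ℕ) :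
    ‖defCoeff Nex ν φ j‖ ≤ Nex * √((ν + 1) / ν) := by
  rw [Real.norm_eq_abs, abs_of_nonneg (by unfold defCoeff mu lam; positivity)]
  calc defCoeff Nex ν φ j
      ≤ Nex * 1 * √((ν + 1) / ν) := by
        unfold defCoeff
        gcongr
        · unfold mu lam; positivity
        · exact Real.sin_sq_le_one _
        · exact mu_succ_div_lam_le hNex hν j
    _ = Nex * √((ν + 1) / ν) := by ring

end Rates

/-- The deformation of the restricted generator is a bounded perturbation:
if `ν > 0` (so `λ_j > 0` for all `j`), then for every `x ∈ ℓ²(ℕ, ℝ)`,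
`∑_j (N_ex·sin²(φ√(j+1))·(μ_{j+1}/λ_j)·x_{j+1})² ≤ (N_ex²(ν+1)/ν)·∑_j x_j²`;
in particular the weighted shift `x ↦ (N_ex·sin²(φ√(j+1))·(μ_{j+1}/λ_j)·x_{j+1})_j` is a
bounded operator on `ℓ²(ℕ, ℝ)` of norm at most `N_ex·√((ν+1)/ν)`. -/
theorem deformation_bounded (Nex ν φ : ℝ) (hNex : 0 < Nex) (hν : 0 < ν) :
    (∀ x : HR,
      Summable (fun j : ℕ => (defCoeff Nex ν φ j * (x : ∀ _ : ℕ, ℝ) (j + 1)) ^ 2) ∧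
      ∑' j : ℕ, (defCoeff Nex ν φ j * (x : ∀ _ : ℕ, ℝ) (j + 1)) ^ 2 ≤
        Nex ^ 2 * (ν + 1) / ν * ∑' j : ℕ, ((x : ∀ _ : ℕ, ℝ) j) ^ 2) ∧
    ∃ T : HR →L[ℝ] HR,
      (∀ (x : HR) (j : ℕ), (T x : ∀ _ : ℕ, ℝ) j = defCoeff Nex ν φ j * (x : ∀ _ : ℕ, ℝ) (j + 1)) ∧
      ‖T‖ ≤ Nex * Real.sqrt ((ν + 1) / ν) := by
  have hK : 0 ≤ Nex * √((ν + 1) / ν) := by positivity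
  set T := lp.weightedShift ℝ 2 (defCoeff Nex ν φ) hK (norm_defCoeff_le hNex.le hν)
  have hT : ‖T‖ ≤ Nex * √((ν + 1) / ν) := lp.norm_weightedShift_le _ hK _
  refine ⟨fun x => ?_, T, lp.weightedShift_apply _ hK _, hT⟩
  have hTx := lp.hasSum_sq (T x)
  refine ⟨hTx.summable, ?_⟩
  calc ∑' j, (defCoeff Nex ν φ j * (x : ∀ _ : ℕ, ℝ) (j + 1)) ^ 2 = ‖T x‖ ^ 2 := hTx.tsum_eq
    _ ≤ (Nex * √((ν + 1) / ν) * ‖x‖) ^ 2 := by gcongr; exact T.le_of_opNorm_le hT x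
    _ = Nex ^ 2 * (ν + 1) / ν * ‖x‖ ^ 2 := by
        rw [mul_pow, mul_pow, Real.sq_sqrt (by positivity)]; ring
    _ = Nex ^ 2 * (ν + 1) / ν * ∑' j, ((x : ∀ _ : ℕ, ℝ) j) ^ 2 := by
        rw [(lp.hasSum_sq x).tsum_eq]
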